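/- Let n be a positive natural number and let M_n(ℂ) denote the algebra of n×n complex matrices. Every 2-local inner derivation Δ : M_n(ℂ) → M_n(ℂ) is a derivation, i.e., Δ is additive, ℂ-homogeneous, and satisfies Δ(x·y) = Δ(x)·y + x·Δ(y) for all x, y ∈ M_n(ℂ). -/

import Mathlib

/-!
For a 2-local inner derivation `Δ` of `Mₙ(K)`, choosing `a` for the pair `(x, z)` turns
`Δ x * z + x * Δ z` into the commutator `a * (x * z) - (x * z) * a`, which has trace zero and
vanishes when `x * z = 0`. The first fact, `tr (Δ x * z) = -tr (x * Δ z)`, makes `Δ` linear by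
nondegeneracy of the trace form, so the Leibniz defect `B x y = Δ (x * y) - Δ x * y - x * Δ y`
is bilinear; the second says `B` vanishes on zero products. For an idempotent `e` this gives
`B (x * e) y = B (x * e) (e * y) = B x (e * y)`, and since idempotents span `Mₙ(K)`,
`B x y = B 1 (x * y) = -Δ 1 * (x * y) = 0`.
-/

def IsTwoLocalInnerDerivation {A : Type*} [Ring A] (Δ : A → A) : Prop :=
  ∀ x y : A, ∃ a : A, Δ x = a * x - x * a ∧ Δ y = a * y - y * a

namespace LinearMap

variable {K A M : Type*} [CommRing K] [Ring A] [Algebra K A] [AddCommGroup M] [Module K M]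
  {B : A →ₗ[K] A →ₗ[K] M}

theorem apply_mul_eq_apply_mul_of_isIdempotentElem (hB : ∀ x y, x * y = 0 → B x y = 0)
    {e : A} (he : IsIdempotentElem e) (x y : A) : B (x * e) y = B x (e * y) := by
  have hleft : B (x * e) ((1 - e) * y) = 0 := hB _ _ <| by
    rw [mul_assoc, ← mul_assoc e, mul_sub, mul_one, he.eq, sub_self, zero_mul, mul_zero]
  have hright : B (x * (1 - e)) (e * y) = 0 := hB _ _ <| by
    rw [mul_assoc, ← mul_assoc (1 - e), sub_mul, one_mul, he.eq, sub_self, zero_mul, mul_zero]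
  calc B (x * e) y = B (x * e) (e * y) + B (x * e) ((1 - e) * y) := by
        rw [← map_add, ← add_mul, add_sub_cancel, one_mul]
    _ = B (x * e) (e * y) + B (x * (1 - e)) (e * y) := by rw [hleft, hright]
    _ = B x (e * y) := by
        rw [← LinearMap.add_apply, ← map_add, ← mul_add, add_sub_cancel, mul_one]

theorem apply_eq_apply_one_mul_of_span_isIdempotentElem
    (hspan : Submodule.span K {e : A | IsIdempotentElem e} = ⊤)
    (hB : ∀ x y, x * y = 0 → B x y = 0) (x y : A) : B x y = B 1 (x * y) := by
  have hmiddle : ∀ z x y : A, B (x * z) y = B x (z * y) := by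
    intro z
    induction (hspan ▸ Submodule.mem_top : z ∈ Submodule.span K {e : A | IsIdempotentElem e})
      using Submodule.span_induction with
    | mem e he => exact apply_mul_eq_apply_mul_of_isIdempotentElem hB he
    | zero => simp
    | add z w _ _ hz hw => intro x y; simp [mul_add, add_mul, hz, hw]
    | smul c z _ hz => intro x y; simp [hz]
  simpa using hmiddle x 1 y

end LinearMap

theorem Matrix.span_isIdempotentElem_eq_top {ι K : Type*} [Fintype ι] [DecidableEq ι]
    [CommRing K] : Submodule.span K {e : Matrix ι ι K | IsIdempotentElem e} = ⊤ := by
  refine Submodule.eq_top_iff'.mpr fun z =>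
    Matrix.induction_on' z (zero_mem _) (fun _ _ => add_mem) fun i j c => ?_
  rw [← mul_one c, ← smul_eq_mul, ← Matrix.smul_single]
  refine Submodule.smul_mem _ c ?_
  by_cases hij : i = j
  · subst hij
    exact Submodule.subset_span (by simp [IsIdempotentElem])
  · have h : IsIdempotentElem (single i i (1 : K) + single i j 1) := by
      simp [IsIdempotentElem, add_mul, mul_add, Ne.symm hij]
    rw [← add_sub_cancel_left (single i i (1 : K)) (single i j 1)]
    exact sub_mem (Submodule.subset_span h) (Submodule.subset_span (by simp [IsIdempotentElem]))

namespace IsTwoLocalInnerDerivation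

section Ring

variable {A : Type*} [Ring A] {Δ : A → A}

theorem map_zero (hΔ : IsTwoLocalInnerDerivation Δ) : Δ 0 = 0 := by
  obtain ⟨_, h, -⟩ := hΔ 0 0
  simpa using h

theorem map_one (hΔ : IsTwoLocalInnerDerivation Δ) : Δ 1 = 0 := by
  obtain ⟨_, h, -⟩ := hΔ 1 1
  simpa using h

theorem exists_map_mul_add_mul_map_eq (hΔ : IsTwoLocalInnerDerivation Δ) (x y : A) :
    ∃ a : A, Δ x * y + x * Δ y = a * (x * y) - x * y * a := by
  obtain ⟨a, hx, hy⟩ := hΔ x y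
  exact ⟨a, by rw [hx, hy]; noncomm_ring⟩

theorem map_mul_of_mul_eq_zero (hΔ : IsTwoLocalInnerDerivation Δ) {x y : A} (hxy : x * y = 0) :
    Δ (x * y) = Δ x * y + x * Δ y := by
  obtain ⟨a, h⟩ := hΔ.exists_map_mul_add_mul_map_eq x y
  rw [h, hxy, hΔ.map_zero, mul_zero, zero_mul, sub_zero]

end Ring

section Matrix

variable {ι K : Type*} [Fintype ι] [DecidableEq ι] [CommRing K]
  {Δ : Matrix ι ι K → Matrix ι ι K}

theorem trace_map_mul_add_trace_mul_map (hΔ : IsTwoLocalInnerDerivation Δ)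
    (x z : Matrix ι ι K) : (Δ x * z).trace + (x * Δ z).trace = 0 := by
  obtain ⟨a, h⟩ := hΔ.exists_map_mul_add_mul_map_eq x z
  rw [← Matrix.trace_add, h, Matrix.trace_sub, Matrix.trace_mul_comm, sub_self]

theorem trace_map_mul (hΔ : IsTwoLocalInnerDerivation Δ) (x z : Matrix ι ι K) :
    (Δ x * z).trace = -(x * Δ z).trace :=
  eq_neg_of_add_eq_zero_left (hΔ.trace_map_mul_add_trace_mul_map x z)

theorem map_add (hΔ : IsTwoLocalInnerDerivation Δ) (x y : Matrix ι ι K) :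
    Δ (x + y) = Δ x + Δ y :=
  Matrix.ext_iff_trace_mul_right.mpr fun z => by
    simp only [Matrix.add_mul, Matrix.trace_add, hΔ.trace_map_mul, neg_add]

theorem map_smul (hΔ : IsTwoLocalInnerDerivation Δ) (c : K) (x : Matrix ι ι K) :
    Δ (c • x) = c • Δ x :=
  Matrix.ext_iff_trace_mul_right.mpr fun z => by
    simp only [Matrix.smul_mul, Matrix.trace_smul, hΔ.trace_map_mul, smul_neg]

theorem map_mul (hΔ : IsTwoLocalInnerDerivation Δ) (x y : Matrix ι ι K) :
    Δ (x * y) = Δ x * y + x * Δ y := by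
  let B : Matrix ι ι K →ₗ[K] Matrix ι ι K →ₗ[K] Matrix ι ι K :=
    LinearMap.mk₂ K (fun x y => Δ (x * y) - Δ x * y - x * Δ y)
      (fun x x' y => by simp only [add_mul, hΔ.map_add]; abel)
      (fun c x y => by simp only [smul_mul_assoc, hΔ.map_smul, smul_sub])
      (fun x y y' => by simp only [mul_add, hΔ.map_add]; abel)
      (fun c x y => by simp only [mul_smul_comm, hΔ.map_smul, smul_sub])
  have h := B.apply_eq_apply_one_mul_of_span_isIdempotentElem Matrix.span_isIdempotentElem_eq_top
    (fun x y hxy => by simp [B, hΔ.map_mul_of_mul_eq_zero hxy]) x y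
  simpa [B, hΔ.map_one, sub_sub, sub_eq_zero] using h

end Matrix

end IsTwoLocalInnerDerivation

theorem twoLocal_inner_derivation_is_derivation_Mn_general
    (n : ℕ)
    (Δ : Matrix (Fin n) (Fin n) ℂ → Matrix (Fin n) (Fin n) ℂ)
    (h2loc : ∀ x y : Matrix (Fin n) (Fin n) ℂ, ∃ a : Matrix (Fin n) (Fin n) ℂ,
      Δ x = a * x - x * a ∧ Δ y = a * y - y * a) :
    (∀ x y, Δ (x + y) = Δ x + Δ y) ∧
    (∀ (c : ℂ) x, Δ (c • x) = c • Δ x) ∧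
    (∀ x y, Δ (x * y) = Δ x * y + x * Δ y) := by
  have hΔ : IsTwoLocalInnerDerivation Δ := h2loc
  exact ⟨hΔ.map_add, hΔ.map_smul, hΔ.map_mul⟩

/-- Every 2-local inner derivation on the matrix algebra `Mₙ(ℂ)` is a derivation. -/
theorem twoLocal_inner_derivation_is_derivation_Mn
    (n : ℕ) (hn : 0 < n)
    (Δ : Matrix (Fin n) (Fin n) ℂ → Matrix (Fin n) (Fin n) ℂ)
    (h2loc : ∀ x y : Matrix (Fin n) (Fin n) ℂ, ∃ a : Matrix (Fin n) (Fin n) ℂ,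
      Δ x = a * x - x * a ∧ Δ y = a * y - y * a) :
    (∀ x y, Δ (x + y) = Δ x + Δ y) ∧
    (∀ (c : ℂ) x, Δ (c • x) = c • Δ x) ∧
    (∀ x y, Δ (x * y) = Δ x * y + x * Δ y) :=
  twoLocal_inner_derivation_is_derivation_Mn_general n Δ h2loc
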